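/- Under Assumption ‖φ^{j₀}‖ < 1 for some j₀ ∈ ℕ, the stationary solution of the functional ARMA(1,q) equation X_n = φ X_{n−1} + ∑_{j=1}^q θ_j ε_{n−j} + ε_n is unique: any stationary solution X'_n equals the causal series solution X_n in L²_H. -/

import Mathlib

open Finset Filter Topology MeasureTheory
open scoped ENNReal RealInnerProductSpace

/-!
The difference `D n = X' n - X n` of the stationary and the causal solution solves the homogeneous
equation `D n = φ (D (n - 1))`, hence `D n = φ ^ m (D (n - m))` for every `m`. Both solutions are
bounded in `L²`: `X'` by stationarity, `X` because `‖φ ^ j₀‖ < 1` makes `∑ ‖φ ^ m‖`, and with it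
`∑ ‖ψ j‖`, finite. So `‖D n‖_{L²} ≤ ‖φ ^ m‖ C → 0`.
-/

section NormPowers

variable {R : Type*} [NormedRing R]

lemma norm_pow_mul_le (a x : R) (k : ℕ) : ‖a ^ k * x‖ ≤ ‖a‖ ^ k * ‖x‖ := by
  induction k with
  | zero => simp
  | succ k ih =>
    calc ‖a ^ (k + 1) * x‖ = ‖a * (a ^ k * x)‖ := by rw [pow_succ', mul_assoc]
      _ ≤ ‖a‖ * (‖a‖ ^ k * ‖x‖) := norm_mul_le_of_le le_rfl ih
      _ = ‖a‖ ^ (k + 1) * ‖x‖ := by ring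

lemma summable_pow_div_of_lt_one {ρ : ℝ} (h0 : 0 ≤ ρ) (h1 : ρ < 1) (d : ℕ) [NeZero d] :
    Summable fun m : ℕ => ρ ^ (m / d) := by
  have hprod : Summable fun p : ℕ × Fin d => ρ ^ p.1 :=
    ((summable_geometric_of_lt_one h0 h1).mul_of_nonneg
      (.of_finite : Summable fun _ : Fin d => (1 : ℝ)) (fun _ => by positivity)
      (fun _ => zero_le_one)).congr fun _ => mul_one _
  exact (Nat.divModEquiv d).summable_iff.mpr hprod

lemma summable_norm_pow_of_norm_pow_lt_one {a : R} {d : ℕ} (h : ‖a ^ d‖ < 1) :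
    Summable fun m : ℕ => ‖a ^ m‖ := by
  rcases subsingleton_or_nontrivial R with hR | hR
  · simp [Subsingleton.elim _ (0 : R)]
  have hd : 0 < d := Nat.pos_of_ne_zero fun hd => by
    simp only [hd, pow_zero] at h
    exact (one_le_norm_one R).not_gt h
  have : NeZero d := ⟨hd.ne'⟩
  refine .of_nonneg_of_le (fun _ => norm_nonneg _) (fun m => ?_)
    ((summable_pow_div_of_lt_one (norm_nonneg _) h d).mul_right (∑ r ∈ range d, ‖a ^ r‖))
  calc ‖a ^ m‖ = ‖(a ^ d) ^ (m / d) * a ^ (m % d)‖ := by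
        rw [← pow_mul, ← pow_add, Nat.div_add_mod]
    _ ≤ ‖a ^ d‖ ^ (m / d) * ‖a ^ (m % d)‖ := norm_pow_mul_le _ _ _
    _ ≤ ‖a ^ d‖ ^ (m / d) * ∑ r ∈ range d, ‖a ^ r‖ := by
        gcongr
        exact single_le_sum (f := fun r => ‖a ^ r‖) (fun _ _ => norm_nonneg _)
          (mem_range.mpr (Nat.mod_lt _ hd))

end NormPowers

section ARMACoefficients

variable {R : Type*} [Ring R] (φ : R) (θ : ℕ → R) (q : ℕ)

def armaCoeff (j : ℕ) : R :=
  if j < q then ∑ k ∈ range (j + 1), φ ^ (j - k) * θ k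
  else φ ^ (j - q) * ∑ k ∈ range (q + 1), φ ^ (q - k) * θ k

variable {φ θ q}

lemma armaCoeff_of_le {j : ℕ} (hj : j ≤ q) :
    armaCoeff φ θ q j = ∑ k ∈ range (j + 1), φ ^ (j - k) * θ k := by
  rcases hj.lt_or_eq with hj | rfl
  · rw [armaCoeff, if_pos hj]
  · rw [armaCoeff, if_neg (lt_irrefl j), Nat.sub_self, pow_zero, one_mul]

lemma armaCoeff_of_ge {j : ℕ} (hj : q ≤ j) :
    armaCoeff φ θ q j = φ ^ (j - q) * armaCoeff φ θ q q := by
  rw [armaCoeff, if_neg hj.not_gt, armaCoeff_of_le le_rfl]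

lemma armaCoeff_zero (hθ : θ 0 = 1) : armaCoeff φ θ q 0 = 1 := by
  simp [armaCoeff_of_le (Nat.zero_le q), hθ]

lemma armaCoeff_succ (j : ℕ) :
    armaCoeff φ θ q (j + 1) = φ * armaCoeff φ θ q j + if j + 1 ≤ q then θ (j + 1) else 0 := by
  split_ifs with h
  · rw [armaCoeff_of_le h, armaCoeff_of_le (Nat.le_of_succ_le h), sum_range_succ, mul_sum,
      Nat.sub_self, pow_zero, one_mul]
    congr 1
    refine sum_congr rfl fun k hk => ?_
    rw [← mul_assoc, ← pow_succ', Nat.sub_add_comm (mem_range_succ_iff.mp hk)]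
  · rw [armaCoeff_of_ge (j := j + 1) (by omega), armaCoeff_of_ge (j := j) (by omega), add_zero,
      ← mul_assoc, ← pow_succ', Nat.sub_add_comm (by omega)]

lemma summable_norm_armaCoeff {R : Type*} [NormedRing R] {φ : R} (θ : ℕ → R) (q : ℕ)
    (hφ : Summable fun m : ℕ => ‖φ ^ m‖) : Summable fun j => ‖armaCoeff φ θ q j‖ := by
  refine (summable_nat_add_iff q).mp <| .of_nonneg_of_le (fun _ => norm_nonneg _) (fun j => ?_)
    (hφ.mul_right ‖armaCoeff φ θ q q‖)
  rw [armaCoeff_of_ge (Nat.le_add_left q j), Nat.add_sub_cancel]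
  exact norm_mul_le _ _

end ARMACoefficients

section CausalSeries

variable {𝕜 E : Type*} [NontriviallyNormedField 𝕜] [NormedAddCommGroup E] [NormedSpace 𝕜 E]

lemma tsum_armaCoeff_apply {φ : E →L[𝕜] E} {θ : ℕ → E →L[𝕜] E} {q : ℕ} (hθ : θ 0 = 1)
    (e : ℤ → E) (n : ℤ) (hn : Summable fun j : ℕ => armaCoeff φ θ q j (e (n - j)))
    (hn₁ : Summable fun j : ℕ => armaCoeff φ θ q j (e (n - 1 - j))) :
    ∑' j : ℕ, armaCoeff φ θ q j (e (n - j)) =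
      φ (∑' j : ℕ, armaCoeff φ θ q j (e (n - 1 - j))) + ∑ j ∈ Icc 1 q, θ j (e (n - j)) + e n := by
  set maTerm : ℕ → E := fun j => (if j + 1 ≤ q then θ (j + 1) else 0) (e (n - 1 - j))
  have hsucc (j : ℕ) : armaCoeff φ θ q (j + 1) (e (n - (j + 1 : ℕ))) =
      φ (armaCoeff φ θ q j (e (n - 1 - j))) + maTerm j := by
    rw [armaCoeff_succ, Nat.cast_succ, sub_add_eq_sub_sub_swap]
    rfl
  have hmaTerm_support (j : ℕ) (hj : j ∉ range q) : maTerm j = 0 := by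
    simp only [maTerm, if_neg (show ¬ j + 1 ≤ q by simpa using hj), zero_apply]
  have hmaTerm_sum : ∑' j, maTerm j = ∑ j ∈ Icc 1 q, θ j (e (n - j)) := by
    rw [tsum_eq_sum hmaTerm_support, ← Ico_add_one_right_eq_Icc, sum_Ico_eq_sum_range,
      Nat.add_sub_cancel]
    refine sum_congr rfl fun j hj => ?_
    rw [add_comm 1 j]
    simp only [maTerm, if_pos (Nat.succ_le_of_lt (mem_range.mp hj))]
    congr 2
    push_cast
    ring
  rw [hn.tsum_eq_zero_add, armaCoeff_zero hθ, tsum_congr hsucc,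
    (hn₁.mapL φ).tsum_add (summable_of_ne_finset_zero hmaTerm_support), ← φ.map_tsum hn₁,
    hmaTerm_sum]
  simp only [Nat.cast_zero, sub_zero, one_apply_eq_self]
  abel

end CausalSeries

section LpBounds

variable {Ω 𝕜 E F : Type*} [MeasurableSpace Ω] {μ : Measure Ω} [NontriviallyNormedField 𝕜]
  [NormedAddCommGroup E] [NormedSpace 𝕜 E] [NormedAddCommGroup F] [NormedSpace 𝕜 F]
  {p : ℝ≥0∞}

lemma eLpNorm_clm_apply_le (A : E →L[𝕜] F) (g : Ω → E) (p : ℝ≥0∞) :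
    eLpNorm (fun ω => A (g ω)) p μ ≤ ‖A‖ₑ * eLpNorm g p μ :=
  eLpNorm_le_mul_eLpNorm_of_ae_le_mul' (.of_forall fun _ => A.le_opENorm _) p

lemma aestronglyMeasurable_tsum {f : ℕ → Ω → F} (hf : ∀ j, AEStronglyMeasurable (f j) μ)
    (hsum : ∀ᵐ ω ∂μ, Summable fun j => f j ω) :
    AEStronglyMeasurable (fun ω => ∑' j, f j ω) μ :=
  aestronglyMeasurable_of_tendsto_ae atTop (f := fun n ω => ∑ j ∈ range n, f j ω)
    (fun _ => Finset.aestronglyMeasurable_fun_sum _ fun j _ => hf j)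
    (hsum.mono fun _ h => h.hasSum.tendsto_sum_nat)

lemma eLpNorm_tsum_le {f : ℕ → Ω → F} (hp : 1 ≤ p) (hf : ∀ j, AEStronglyMeasurable (f j) μ)
    (hsum : ∀ᵐ ω ∂μ, Summable fun j => f j ω) :
    eLpNorm (fun ω => ∑' j, f j ω) p μ ≤ ∑' j, eLpNorm (f j) p μ := by
  refine Lp.eLpNorm_le_of_ae_tendsto (u := atTop) (f := fun n => ∑ j ∈ range n, f j)
    (.of_forall fun n => ?_) (fun n => Finset.aestronglyMeasurable_sum _ fun j _ => hf j) ?_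
  · exact (eLpNorm_sum_le (fun j _ => hf j) hp).trans (ENNReal.sum_le_tsum _)
  · filter_upwards [hsum] with ω h
    simpa only [Finset.sum_apply] using h.hasSum.tendsto_sum_nat

lemma tsum_eLpNorm_clm_apply_le (A : ℕ → E →L[𝕜] F) {g : ℕ → Ω → E} {C : ℝ≥0∞}
    (hg : ∀ j, eLpNorm (g j) p μ ≤ C) :
    ∑' j, eLpNorm (fun ω => A j (g j ω)) p μ ≤ (∑' j, ‖A j‖ₑ) * C := by
  rw [← ENNReal.tsum_mul_right]
  exact ENNReal.tsum_le_tsum fun j => (eLpNorm_clm_apply_le _ _ _).trans (by gcongr; exact hg j)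

lemma ae_summable_clm_apply [CompleteSpace F] {A : ℕ → E →L[𝕜] F} {g : ℕ → Ω → E} {C : ℝ≥0∞}
    (hA : Summable fun j => ‖A j‖) (hgm : ∀ j, AEStronglyMeasurable (g j) μ) (hp : 1 ≤ p)
    (hg : ∀ j, eLpNorm (g j) p μ ≤ C) (hC : C ≠ ∞) :
    ∀ᵐ ω ∂μ, Summable fun j => A j (g j ω) := by
  have hfin : (∑' j, ‖A j‖ₑ) * C ≠ ∞ :=
    ENNReal.mul_ne_top (tsum_enorm_ne_top_iff_summable_norm.mpr hA) hC
  filter_upwards [summable_norm_of_tsum_eLpNorm_ne_top hp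
    (fun j => (A j).continuous.comp_aestronglyMeasurable (hgm j))
    (ne_top_of_le_ne_top hfin (tsum_eLpNorm_clm_apply_le A hg))] with ω h
  exact h.of_norm

lemma eLpNorm_tsum_clm_apply_le {A : ℕ → E →L[𝕜] F} {g : ℕ → Ω → E} {C : ℝ≥0∞} (hp : 1 ≤ p)
    (hgm : ∀ j, AEStronglyMeasurable (g j) μ) (hsum : ∀ᵐ ω ∂μ, Summable fun j => A j (g j ω))
    (hg : ∀ j, eLpNorm (g j) p μ ≤ C) :
    eLpNorm (fun ω => ∑' j, A j (g j ω)) p μ ≤ (∑' j, ‖A j‖ₑ) * C :=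
  (eLpNorm_tsum_le hp (fun j => (A j).continuous.comp_aestronglyMeasurable (hgm j)) hsum).trans
    (tsum_eLpNorm_clm_apply_le A hg)

lemma eLpNorm_two_eq_of_integral_norm_sq_eq {f g : Ω → E} (hf : MemLp f 2 μ) (hg : MemLp g 2 μ)
    (h : ∫ ω, ‖f ω‖ ^ 2 ∂μ = ∫ ω, ‖g ω‖ ^ 2 ∂μ) : eLpNorm f 2 μ = eLpNorm g 2 μ := by
  rw [hf.eLpNorm_eq_integral_rpow_norm two_ne_zero ENNReal.ofNat_ne_top,
    hg.eLpNorm_eq_integral_rpow_norm two_ne_zero ENNReal.ofNat_ne_top]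
  simp only [ENNReal.toReal_ofNat, Real.rpow_two, h]

end LpBounds

section Uniqueness

variable {Ω 𝕜 E : Type*} [MeasurableSpace Ω] {μ : Measure Ω} [NontriviallyNormedField 𝕜]
  [NormedAddCommGroup E] [NormedSpace 𝕜 E] {φ : E →L[𝕜] E} {D : ℤ → Ω → E}

lemma ae_eq_pow_apply_of_ae_eq_apply (hD : ∀ n, D n =ᵐ[μ] fun ω => φ (D (n - 1) ω)) (m : ℕ)
    (n : ℤ) : D n =ᵐ[μ] fun ω => (φ ^ m) (D (n - m) ω) := by
  induction m generalizing n with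
  | zero => simp
  | succ m ih =>
    filter_upwards [ih n, hD (n - m)] with ω h₁ h₂
    rw [h₁, h₂, pow_succ, mul_apply_eq_comp, Nat.cast_succ, sub_sub]

lemma ae_eq_zero_of_ae_eq_apply_of_eLpNorm_le (hφ : Tendsto (φ ^ ·) atTop (𝓝 0))
    (hD : ∀ n, D n =ᵐ[μ] fun ω => φ (D (n - 1) ω)) (hDm : ∀ n, AEStronglyMeasurable (D n) μ)
    {p : ℝ≥0∞} (hp : p ≠ 0) {C : ℝ≥0∞} (hC : C ≠ ∞) (hDC : ∀ n, eLpNorm (D n) p μ ≤ C) (n : ℤ) :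
    D n =ᵐ[μ] 0 := by
  have hle (m : ℕ) : eLpNorm (D n) p μ ≤ ‖φ ^ m‖ₑ * C := calc
    eLpNorm (D n) p μ = eLpNorm (fun ω => (φ ^ m) (D (n - m) ω)) p μ :=
      eLpNorm_congr_ae (ae_eq_pow_apply_of_ae_eq_apply hD m n)
    _ ≤ ‖φ ^ m‖ₑ * C := (eLpNorm_clm_apply_le _ _ _).trans (by gcongr; exact hDC _)
  have hlim : Tendsto (fun m : ℕ => ‖φ ^ m‖ₑ * C) atTop (𝓝 0) := by
    simpa using ENNReal.Tendsto.mul_const (continuous_enorm.tendsto 0 |>.comp hφ) (.inr hC)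
  exact (eLpNorm_eq_zero_iff (hDm n) hp).mp (le_antisymm (ge_of_tendsto' hlim hle) bot_le)

end Uniqueness

theorem stmt8_general {Ω H : Type*} [MeasurableSpace Ω] (μ : Measure Ω)
    [NormedAddCommGroup H] [InnerProductSpace ℝ H] [CompleteSpace H]
    (ε : ℤ → Ω → H) (σ2 : ℝ)
    (hmem : ∀ n, MemLp (ε n) 2 μ)
    (hvar : ∀ n, ∫ ω, ‖ε n ω‖ ^ 2 ∂μ = σ2)
    (q : ℕ) (φ : H →L[ℝ] H) (θ : ℕ → (H →L[ℝ] H)) (hθ0 : θ 0 = 1)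
    (hφ : ∃ j₀ : ℕ, ‖φ ^ j₀‖ < 1)
    (ψ : ℕ → (H →L[ℝ] H))
    (hψ : ∀ j : ℕ, ψ j =
      if j < q then ∑ k ∈ Finset.range (j + 1), (φ ^ (j - k)) ∘L θ k
      else (φ ^ (j - q)) ∘L ∑ k ∈ Finset.range (q + 1), (φ ^ (q - k)) ∘L θ k)
    (X : ℤ → Ω → H) (hX : ∀ n ω, X n ω = ∑' j : ℕ, (ψ j) (ε (n - j) ω))
    (X' : ℤ → Ω → H) (hmem' : ∀ n, MemLp (X' n) 2 μ)
    (hstat : ∀ n : ℤ, ∫ ω, ‖X' n ω‖ ^ 2 ∂μ = ∫ ω, ‖X' 0 ω‖ ^ 2 ∂μ)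
    (heq : ∀ n : ℤ, ∀ᵐ ω ∂μ,
      X' n ω = φ (X' (n - 1) ω) + (∑ j ∈ Finset.Icc 1 q, (θ j) (ε (n - j) ω)) + ε n ω) :
    ∀ n : ℤ, X' n =ᵐ[μ] X n := by
  obtain ⟨j₀, hj₀⟩ := hφ
  -- `f ∘L g` is definitionally `f * g`
  obtain rfl : ψ = armaCoeff φ θ q := funext hψ
  have hφpow := summable_norm_pow_of_norm_pow_lt_one hj₀
  have hψsum := summable_norm_armaCoeff θ q hφpow
  set K := eLpNorm (ε 0) 2 μ
  set S := ∑' j, ‖armaCoeff φ θ q j‖ₑ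
  have hεK (n : ℤ) (j : ℕ) : eLpNorm (ε (n - j)) 2 μ ≤ K :=
    (eLpNorm_two_eq_of_integral_norm_sq_eq (hmem _) (hmem 0) ((hvar _).trans (hvar 0).symm)).le
  have hεm (n : ℤ) (j : ℕ) : AEStronglyMeasurable (ε (n - j)) μ := (hmem _).1
  have hsum (n : ℤ) := ae_summable_clm_apply hψsum (hεm n) one_le_two (hεK n)
    (hmem 0).eLpNorm_ne_top
  have hXm (n : ℤ) : AEStronglyMeasurable (X n) μ := by
    rw [funext (hX n)]
    exact aestronglyMeasurable_tsum
      (fun j => (armaCoeff φ θ q j).continuous.comp_aestronglyMeasurable (hεm n j)) (hsum n)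
  have hXC (n : ℤ) : eLpNorm (X n) 2 μ ≤ S * K := by
    rw [funext (hX n)]
    exact eLpNorm_tsum_clm_apply_le one_le_two (hεm n) (hsum n) (hεK n)
  have hD (n : ℤ) : (X' - X) n =ᵐ[μ] fun ω => φ ((X' - X) (n - 1) ω) := by
    filter_upwards [heq n, hsum n, hsum (n - 1)] with ω hω h₁ h₂
    simp only [Pi.sub_apply]
    rw [hω, hX n, hX (n - 1), tsum_armaCoeff_apply hθ0 (fun k => ε k ω) n h₁ h₂, map_sub]
    abel
  have hDC (n : ℤ) : eLpNorm ((X' - X) n) 2 μ ≤ eLpNorm (X' 0) 2 μ + S * K :=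
    (eLpNorm_sub_le (hmem' n).1 (hXm n) one_le_two).trans (add_le_add
      (eLpNorm_two_eq_of_integral_norm_sq_eq (hmem' n) (hmem' 0) (hstat n)).le (hXC n))
  have hC : eLpNorm (X' 0) 2 μ + S * K ≠ ∞ :=
    ENNReal.add_ne_top.mpr ⟨(hmem' 0).eLpNorm_ne_top, ENNReal.mul_ne_top
      (tsum_enorm_ne_top_iff_summable_norm.mpr hψsum) (hmem 0).eLpNorm_ne_top⟩
  intro n
  filter_upwards [ae_eq_zero_of_ae_eq_apply_of_eLpNorm_le hφpow.of_norm.tendsto_atTop_zero hD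
    (fun n => (hmem' n).1.sub (hXm n)) two_ne_zero hC hDC n] with ω h
  exact sub_eq_zero.mp h

/-- Uniqueness: any stationary solution of the functional ARMA(1,q) equation
coincides in `L²_H` with the causal series solution. -/
theorem stmt8 {Ω H : Type*} [MeasurableSpace Ω] (μ : Measure Ω) [IsProbabilityMeasure μ]
    [NormedAddCommGroup H] [InnerProductSpace ℝ H] [CompleteSpace H]
    [SecondCountableTopology H]
    (ε : ℤ → Ω → H) (σ2 : ℝ)
    (hmem : ∀ n, MemLp (ε n) 2 μ)
    (hmean : ∀ n (y : H), ∫ ω, ⟪ε n ω, y⟫ ∂μ = 0)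
    (hvar : ∀ n, ∫ ω, ‖ε n ω‖ ^ 2 ∂μ = σ2)
    (hcov : ∀ n (y : H), ∫ ω, ⟪ε n ω, y⟫ • ε n ω ∂μ = ∫ ω, ⟪ε 0 ω, y⟫ • ε 0 ω ∂μ)
    (hcross : ∀ n m : ℤ, n ≠ m → ∀ y : H, ∫ ω, ⟪ε m ω, y⟫ • ε n ω ∂μ = 0)
    (q : ℕ) (φ : H →L[ℝ] H) (θ : ℕ → (H →L[ℝ] H)) (hθ0 : θ 0 = 1)
    (hφ : ∃ j₀ : ℕ, ‖φ ^ j₀‖ < 1)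
    (ψ : ℕ → (H →L[ℝ] H))
    (hψ : ∀ j : ℕ, ψ j =
      if j < q then ∑ k ∈ Finset.range (j + 1), (φ ^ (j - k)) ∘L θ k
      else (φ ^ (j - q)) ∘L ∑ k ∈ Finset.range (q + 1), (φ ^ (q - k)) ∘L θ k)
    (X : ℤ → Ω → H) (hX : ∀ n ω, X n ω = ∑' j : ℕ, (ψ j) (ε (n - j) ω))
    (X' : ℤ → Ω → H) (hmem' : ∀ n, MemLp (X' n) 2 μ)
    (hstat : ∀ n : ℤ, ∫ ω, ‖X' n ω‖ ^ 2 ∂μ = ∫ ω, ‖X' 0 ω‖ ^ 2 ∂μ)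
    (heq : ∀ n : ℤ, ∀ᵐ ω ∂μ,
      X' n ω = φ (X' (n - 1) ω) + (∑ j ∈ Finset.Icc 1 q, (θ j) (ε (n - j) ω)) + ε n ω) :
    ∀ n : ℤ, X' n =ᵐ[μ] X n :=
  stmt8_general μ ε σ2 hmem hvar q φ θ hθ0 hφ ψ hψ X hX X' hmem' hstat heq
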